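/- KKT consequences for the weighted nodewise Lasso (basis of the bound |Â_j(τ)'M̂(τ) − ẽ_j'|_∞ ≤ λ_node·||Γ̂_j(τ)||·ẑ_j(τ)^{-2}): Fix τ ∈ ℝ, j ∈ {1,…,p} and λ_node > 0. Let X^{(l)}(τ) ∈ ℝ^n (l = 1,…,p) have entries X_i^{(l)}·1{Q_i<τ}, let X^{(−j)}(τ) be the n×(p−1) matrix of all columns except the j-th, and let Γ̂_j(τ) := diag(||X^{(l)}(τ)||_n : l ≠ j). Suppose γ̂_j minimizes γ ↦ ||X^{(j)}(τ) − X^{(−j)}(τ)γ||_n² + λ_node·|Γ̂_j(τ)γ|_1 over γ ∈ ℝ^{p−1}, and set ẑ_j(τ)² := ||X^{(j)}(τ) − X^{(−j)}(τ)γ̂_j||_n² + λ_node·|Γ̂_j(τ)γ̂_j|_1. Then: (i) for every l ≠ j, | n^{-1}·(X^{(l)}(τ))'( X^{(j)}(τ) − X^{(−j)}(τ)γ̂_j ) | ≤ (λ_node/2)·||X^{(l)}(τ)||_n; and (ii) n^{-1}·(X^{(j)}(τ))'( X^{(j)}(τ) − X^{(−j)}(τ)γ̂_j ) = ẑ_j(τ)²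 − (λ_node/2)·|Γ̂_j(τ)γ̂_j|_1. Consequently, with Ĉ_j(τ) ∈ ℝ^p the vector with entry 1 at position j and −γ̂_j^{(l)} at positions l ≠ j, Â_j(τ) := Ĉ_j(τ)/ẑ_j(τ)² (assuming ẑ_j(τ)² > 0), and M̂(τ) := n^{-1} Σ_{i=1}^n X_iX_i'·1{Q_i<τ}: every off-diagonal coordinate l ≠ j of Â_j(τ)'M̂(τ) − ẽ_j' has absolute value at most (λ_node/2)·||X^{(l)}(τ)||_n/ẑ_j(τ)², and its j-th coordinate equals −(λ_node/2)·|Γ̂_j(τ)γ̂_j|_1/ẑ_j(τ)². -/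

import Mathlib

open Finset

noncomputable section

/-- Squared empirical norm. -/
def enorm2 (n : ℕ) (v : Fin n → ℝ) : ℝ := (n : ℝ)⁻¹ * ∑ i, v i ^ 2

/-- Empirical norm. -/
def enormn (n : ℕ) (v : Fin n → ℝ) : ℝ := Real.sqrt (enorm2 n v)

lemma enorm2_nonneg (n : ℕ) (v : Fin n → ℝ) : 0 ≤ enorm2 n v := by
  unfold enorm2; positivity

lemma enormn_nonneg (n : ℕ) (v : Fin n → ℝ) : 0 ≤ enormn n v := Real.sqrt_nonneg _

lemma aux_le_zero (A B : ℝ) (h : ∀ t : ℝ, 0 < t → t ≤ 1 → A ≤ t * B) : A ≤ 0 := by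
  rcases le_or_gt B 0 with hB | hB
  · have := h 1 one_pos le_rfl; linarith
  · by_contra hA
    push_neg at hA
    have ht : 0 < min 1 (A / (2*B)) := lt_min one_pos (by positivity)
    have h1 := h _ ht (min_le_left _ _)
    have h2 : min 1 (A/(2*B)) * B ≤ (A/(2*B)) * B :=
      mul_le_mul_of_nonneg_right (min_le_right _ _) hB.le
    have h3 : (A/(2*B)) * B = A/2 := by field_simp
    linarith

lemma enorm2_expand (n : ℕ) (r v : Fin n → ℝ) (t : ℝ) :
    enorm2 n (fun i => r i - t * v i)
      = enorm2 n r - 2*t*((n:ℝ)⁻¹ * ∑ i, v i * r i) + t^2 * enorm2 n v := by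
  simp only [enorm2]
  have h : ∀ i ∈ Finset.univ, (r i - t * v i)^2 = r i^2 - 2*t*(v i * r i) + t^2 * v i^2 :=
    fun i _ => by ring
  rw [Finset.sum_congr rfl h, Finset.sum_add_distrib, Finset.sum_sub_distrib,
    ← Finset.mul_sum, ← Finset.mul_sum]
  ring

/-- KKT consequences for the weighted nodewise Lasso. -/
theorem stmt16 (n p : ℕ) (X : Fin n → Fin p → ℝ) (Q : Fin n → ℝ) (τ : ℝ) (j : Fin p)
    (lamnode : ℝ) (hlam : 0 < lamnode)
    -- the columns X⁽ˡ⁾(τ)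
    (Xcol : Fin p → Fin n → ℝ)
    (hXcol : ∀ l i, Xcol l i = if Q i < τ then X i l else 0)
    -- γ̂_j minimizes the weighted nodewise Lasso objective
    (γhat : {l : Fin p // l ≠ j} → ℝ)
    (hmin : ∀ γ : {l : Fin p // l ≠ j} → ℝ,
      enorm2 n (fun i => Xcol j i - ∑ l : {l : Fin p // l ≠ j}, Xcol l.1 i * γhat l) +
          lamnode * ∑ l : {l : Fin p // l ≠ j}, enormn n (Xcol l.1) * |γhat l| ≤
        enorm2 n (fun i => Xcol j i - ∑ l : {l : Fin p // l ≠ j}, Xcol l.1 i * γ l) +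
          lamnode * ∑ l : {l : Fin p // l ≠ j}, enormn n (Xcol l.1) * |γ l|)
    -- the residual and ẑ_j(τ)²
    (resid : Fin n → ℝ)
    (hresid : ∀ i, resid i = Xcol j i - ∑ l : {l : Fin p // l ≠ j}, Xcol l.1 i * γhat l)
    (z2 : ℝ)
    (hz2 : z2 = enorm2 n resid +
      lamnode * ∑ l : {l : Fin p // l ≠ j}, enormn n (Xcol l.1) * |γhat l|)
    -- Ĉ_j, Â_j and M̂(τ)
    (Chat Ahat : Fin p → ℝ)
    (hChat : ∀ l : Fin p, Chat l = if h : l = j then 1 else -γhat ⟨l, h⟩)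
    (hAhat : ∀ l, Ahat l = Chat l / z2)
    (Mhat : Fin p → Fin p → ℝ)
    (hMhat : ∀ l m, Mhat l m =
      (n : ℝ)⁻¹ * ∑ i, X i l * X i m * (if Q i < τ then 1 else 0))
    (hz2pos : 0 < z2) :
    -- (i) KKT inequality for the active directions
    (∀ l : {l : Fin p // l ≠ j},
      |(n : ℝ)⁻¹ * ∑ i, Xcol l.1 i * resid i| ≤ lamnode / 2 * enormn n (Xcol l.1)) ∧
    -- (ii) KKT identity for the own direction
    ((n : ℝ)⁻¹ * ∑ i, Xcol j i * resid i =
      z2 - lamnode / 2 * ∑ l : {l : Fin p // l ≠ j}, enormn n (Xcol l.1) * |γhat l|) ∧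
    -- consequence: off-diagonal coordinates of Â_j'M̂(τ) − ẽ_j'
    (∀ l : Fin p, l ≠ j →
      |(∑ m, Ahat m * Mhat m l) - (if l = j then (1 : ℝ) else 0)| ≤
        lamnode / 2 * enormn n (Xcol l) / z2) ∧
    -- consequence: the j-th coordinate of Â_j'M̂(τ) − ẽ_j'
    ((∑ m, Ahat m * Mhat m j) - 1 =
      -(lamnode / 2 * (∑ l : {l : Fin p // l ≠ j}, enormn n (Xcol l.1) * |γhat l|) / z2)) := by
  set S : ℝ := ∑ l : {l : Fin p // l ≠ j}, enormn n (Xcol l.1) * |γhat l| with hS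
  have hfun : (fun i => Xcol j i - ∑ l : {l : Fin p // l ≠ j}, Xcol l.1 i * γhat l) = resid :=
    funext fun i => (hresid i).symm
  rw [hfun] at hmin
  -- Part (i)
  have part1 : ∀ l : {l : Fin p // l ≠ j},
      |(n : ℝ)⁻¹ * ∑ i, Xcol l.1 i * resid i| ≤ lamnode / 2 * enormn n (Xcol l.1) := by
    intro l
    set a : ℝ := (n : ℝ)⁻¹ * ∑ i, Xcol l.1 i * resid i with ha
    set b : ℝ := enorm2 n (Xcol l.1) with hb
    set w : ℝ := enormn n (Xcol l.1) with hw
    have hbnn : 0 ≤ b := enorm2_nonneg _ _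
    have hwnn : 0 ≤ w := enormn_nonneg _ _
    have key : ∀ t : ℝ, 2*t*a ≤ t^2*b + lamnode*(w*|t|) := by
      intro t
      have hm := hmin (fun m => γhat m + if m = l then t else 0)
      have hres : (fun i => Xcol j i -
          ∑ m : {m : Fin p // m ≠ j}, Xcol m.1 i * (γhat m + if m = l then t else 0))
          = fun i => resid i - t * Xcol l.1 i := by
        funext i
        have hsum : ∑ m : {m : Fin p // m ≠ j}, Xcol m.1 i * (γhat m + if m = l then t else 0)
            = (∑ m : {m : Fin p // m ≠ j}, Xcol m.1 i * γhat m) + Xcol l.1 i * t := by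
          simp only [mul_add, Finset.sum_add_distrib, mul_ite, mul_zero,
            Finset.sum_ite_eq', Finset.mem_univ, if_true]
        rw [hsum, hresid i]; ring
      rw [hres, enorm2_expand n resid (Xcol l.1) t, ← ha] at hm
      have hpen : ∑ m : {m : Fin p // m ≠ j},
          enormn n (Xcol m.1) * |γhat m + if m = l then t else 0| ≤ S + w * |t| := by
        have hterm : ∀ m ∈ (Finset.univ : Finset {m : Fin p // m ≠ j}),
            enormn n (Xcol m.1) * |γhat m + if m = l then t else 0| ≤
              enormn n (Xcol m.1) * |γhat m| + (if m = l then w * |t| else 0) := by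
          intro m _
          by_cases h : m = l
          · subst h
            rw [if_pos rfl, if_pos rfl, hw]
            have h1 : |γhat m + t| ≤ |γhat m| + |t| := abs_add_le _ _
            have h2 := mul_le_mul_of_nonneg_left h1 (enormn_nonneg n (Xcol m.1))
            rw [mul_add] at h2
            linarith
          · simp [h]
        have := Finset.sum_le_sum hterm
        rw [Finset.sum_add_distrib, Finset.sum_ite_eq', ← hS] at this
        simpa using this
      have hpen' := mul_le_mul_of_nonneg_left hpen hlam.le
      nlinarith
    have h1 : 2*a - lamnode*w ≤ 0 := by
      apply aux_le_zero _ b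
      intro t ht ht1
      have hk := key t
      rw [abs_of_pos ht] at hk
      nlinarith
    have h2 : -(2*a) - lamnode*w ≤ 0 := by
      apply aux_le_zero _ b
      intro t ht ht1
      have hk := key (-t)
      rw [abs_neg, abs_of_pos ht] at hk
      nlinarith
    rw [abs_le]; constructor <;> nlinarith
  -- Part (ii)
  have part2 : (n : ℝ)⁻¹ * ∑ i, Xcol j i * resid i = z2 - lamnode / 2 * S := by
    set u : Fin n → ℝ := fun i => Xcol j i - resid i with hu
    set c : ℝ := (n : ℝ)⁻¹ * ∑ i, u i * resid i with hc
    set B : ℝ := enorm2 n u with hB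
    have hBnn : 0 ≤ B := enorm2_nonneg _ _
    have key2 : ∀ t : ℝ, |t| ≤ 1/2 → t*(2*c - lamnode*S) ≤ t^2*B := by
      intro t ht
      have hm := hmin (fun m => (1+t) * γhat m)
      have hres : (fun i => Xcol j i -
          ∑ m : {m : Fin p // m ≠ j}, Xcol m.1 i * ((1+t) * γhat m))
          = fun i => resid i - t * u i := by
        funext i
        have hsum : ∑ m : {m : Fin p // m ≠ j}, Xcol m.1 i * ((1+t) * γhat m)
            = (1+t) * ∑ m : {m : Fin p // m ≠ j}, Xcol m.1 i * γhat m := by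
          rw [Finset.mul_sum]; exact Finset.sum_congr rfl fun m _ => by ring
        have h0 : ∑ m : {m : Fin p // m ≠ j}, Xcol m.1 i * γhat m = Xcol j i - resid i := by
          rw [hresid i]; ring
        rw [hsum, h0]
        simp only [hu]; ring
      rw [hres, enorm2_expand n resid u t, ← hc, ← hB] at hm
      have honet : (0:ℝ) ≤ 1 + t := by
        rw [abs_le] at ht; linarith
      have hpen : ∑ m : {m : Fin p // m ≠ j}, enormn n (Xcol m.1) * |(1+t) * γhat m|
          = (1+t) * S := by
        rw [hS, Finset.mul_sum]
        refine Finset.sum_congr rfl fun m _ => ?_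
        rw [abs_mul, abs_of_nonneg honet]; ring
      rw [hpen] at hm
      nlinarith
    have h1 : 2*c - lamnode*S ≤ 0 := by
      apply aux_le_zero _ B
      intro t ht ht1
      have hk := key2 (t/2) (by rw [abs_of_pos (by linarith)]; linarith)
      nlinarith
    have h2 : -(2*c - lamnode*S) ≤ 0 := by
      apply aux_le_zero _ B
      intro t ht ht1
      have hk := key2 (-(t/2)) (by rw [abs_neg, abs_of_pos (by linarith)]; linarith)
      nlinarith
    have hceq : 2*c = lamnode*S := by linarith
    have hsplit : (n : ℝ)⁻¹ * ∑ i, Xcol j i * resid i = c + enorm2 n resid := by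
      have h : ∀ i ∈ (Finset.univ : Finset (Fin n)),
          Xcol j i * resid i = u i * resid i + resid i ^ 2 := by
        intro i _; simp only [hu]; ring
      rw [Finset.sum_congr rfl h, Finset.sum_add_distrib, mul_add, hc, enorm2]
    rw [hsplit, hz2]
    linarith
  -- Key identity for consequences
  have hMX : ∀ m l : Fin p, Mhat m l = (n : ℝ)⁻¹ * ∑ i, Xcol m i * Xcol l i := by
    intro m l
    rw [hMhat]
    congr 1
    refine Finset.sum_congr rfl fun i _ => ?_
    rw [hXcol, hXcol]
    by_cases h : Q i < τ <;> simp [h]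
  have hCsum : ∀ i, ∑ m, Chat m * Xcol m i = resid i := by
    intro i
    rw [hresid i, ← Finset.add_sum_erase _ _ (Finset.mem_univ j), hChat j, dif_pos rfl, one_mul]
    have herase : ∑ m ∈ Finset.univ.erase j, Chat m * Xcol m i
        = ∑ m : {m : Fin p // m ≠ j}, Chat m.1 * Xcol m.1 i := by
      exact Finset.sum_subtype _ (fun x => by simp) (fun m => Chat m * Xcol m i)
    rw [herase]
    have h2 : ∑ m : {m : Fin p // m ≠ j}, Chat m.1 * Xcol m.1 i
        = -∑ m : {m : Fin p // m ≠ j}, Xcol m.1 i * γhat m := by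
      rw [← Finset.sum_neg_distrib]
      refine Finset.sum_congr rfl fun m _ => ?_
      rw [hChat m.1, dif_neg m.2]; ring
    rw [h2]; ring
  have key3 : ∀ l : Fin p, ∑ m, Ahat m * Mhat m l
      = ((n : ℝ)⁻¹ * ∑ i, Xcol l i * resid i) / z2 := by
    intro l
    have step : ∑ m, Ahat m * Mhat m l
        = ((n : ℝ)⁻¹ * ∑ i, (∑ m, Chat m * Xcol m i) * Xcol l i) / z2 := by
      simp only [hAhat, hMX, Finset.sum_mul, Finset.mul_sum]
      rw [Finset.sum_comm, Finset.sum_div]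
      refine Finset.sum_congr rfl fun i _ => ?_
      rw [Finset.sum_div]
      refine Finset.sum_congr rfl fun m _ => ?_
      ring
    rw [step]
    congr 2
    refine Finset.sum_congr rfl fun i _ => ?_
    rw [hCsum i]; ring
  refine ⟨part1, part2, ?_, ?_⟩
  · intro l hl
    rw [if_neg hl, sub_zero, key3 l, abs_div, abs_of_pos hz2pos]
    exact (div_le_div_iff_of_pos_right hz2pos).mpr (part1 ⟨l, hl⟩)
  · rw [key3 j, part2]
    field_simp
    ring
end
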